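/- arXiv:2301.12449 — 5 statements merged into one kernel-verified Lean document; each statement's English description precedes it below -/
import Mathlib

section
/- For every n ≥ 1, Schützenberger's involution is the only involution on the hypoplactic monoid hypo_n; that is, every unary operation * on hypo_n satisfying (x*)* = x and (xy)* = y*x* for all x, y ∈ hypo_n coincides with the Schützenberger involution ♯. -/
open FreeMonoid in
/-- The defining relations of the hypoplactic monoid of rank `n` (letters `0,…,n-1`
standing for `1,…,n`): `acb = cab` (`a ≤ b < c`), `bac = bca` (`a < b ≤ c`),
`cadb = acbd` (`a ≤ b < c ≤ d`), `bdac = dbca` (`a < b ≤ c < d`). -/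
def HypoRel (n : ℕ) : FreeMonoid (Fin n) → FreeMonoid (Fin n) → Prop := fun u v =>
  (∃ a b c : Fin n, a ≤ b ∧ b < c ∧ u = of a * of c * of b ∧ v = of c * of a * of b) ∨
  (∃ a b c : Fin n, a < b ∧ b ≤ c ∧ u = of b * of a * of c ∧ v = of b * of c * of a) ∨
  (∃ a b c d : Fin n, a ≤ b ∧ b < c ∧ c ≤ d ∧
    u = of c * of a * of d * of b ∧ v = of a * of c * of b * of d) ∨
  (∃ a b c d : Fin n, a < b ∧ b ≤ c ∧ c < d ∧
    u = of b * of d * of a * of c ∧ v = of d * of b * of c * of a)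

/-- The congruence on the free monoid generated by the hypoplactic relations. -/
def hypoCon (n : ℕ) : Con (FreeMonoid (Fin n)) := conGen (HypoRel n)

/-- The hypoplactic monoid of rank `n`. -/
abbrev Hypo (n : ℕ) : Type := (hypoCon n).Quotient

/-- Schützenberger's involution on words: reverse the word and apply the
order-reversing permutation `i ↦ n+1−i` (here `Fin.rev`) to each letter. -/
def wordSharp (n : ℕ) (w : FreeMonoid (Fin n)) : FreeMonoid (Fin n) :=
  FreeMonoid.ofList (((FreeMonoid.toList w).map Fin.rev).reverse)

theorem wordSharp_mul {n : ℕ} (u v : FreeMonoid (Fin n)) :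
    wordSharp n (u * v) = wordSharp n v * wordSharp n u := by
  simp [wordSharp]

theorem wordSharp_of {n : ℕ} (x : Fin n) :
    wordSharp n (FreeMonoid.of x) = FreeMonoid.of x.rev := rfl

/-- The hypoplactic congruence is compatible with Schützenberger's involution. -/
theorem wordSharp_wd {n : ℕ} {u v : FreeMonoid (Fin n)} (h : hypoCon n u v) :
    hypoCon n (wordSharp n u) (wordSharp n v) := by
  have h' : ConGen.Rel (HypoRel n) u v := h
  clear h
  show ConGen.Rel (HypoRel n) (wordSharp n u) (wordSharp n v)
  induction h' with
  | of u v huv =>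
    apply ConGen.Rel.of
    rcases huv with ⟨a,b,c,hab,hbc,hu,hv⟩ | ⟨a,b,c,hab,hbc,hu,hv⟩ |
      ⟨a,b,c,d,hab,hbc,hcd,hu,hv⟩ | ⟨a,b,c,d,hab,hbc,hcd,hu,hv⟩
    · refine Or.inr (Or.inl ⟨c.rev, b.rev, a.rev, Fin.rev_lt_rev.mpr hbc,
        Fin.rev_le_rev.mpr hab, ?_, ?_⟩)
      · subst hu; simp [wordSharp_mul, wordSharp_of, mul_assoc]
      · subst hv; simp [wordSharp_mul, wordSharp_of, mul_assoc]
    · refine Or.inl ⟨c.rev, b.rev, a.rev, Fin.rev_le_rev.mpr hbc,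
        Fin.rev_lt_rev.mpr hab, ?_, ?_⟩
      · subst hu; simp [wordSharp_mul, wordSharp_of, mul_assoc]
      · subst hv; simp [wordSharp_mul, wordSharp_of, mul_assoc]
    · refine Or.inr (Or.inr (Or.inl ⟨d.rev, c.rev, b.rev, a.rev,
        Fin.rev_le_rev.mpr hcd, Fin.rev_lt_rev.mpr hbc, Fin.rev_le_rev.mpr hab, ?_, ?_⟩))
      · subst hu; simp [wordSharp_mul, wordSharp_of, mul_assoc]
      · subst hv; simp [wordSharp_mul, wordSharp_of, mul_assoc]
    · refine Or.inr (Or.inr (Or.inr ⟨d.rev, c.rev, b.rev, a.rev,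
        Fin.rev_lt_rev.mpr hcd, Fin.rev_le_rev.mpr hbc, Fin.rev_lt_rev.mpr hab, ?_, ?_⟩))
      · subst hu; simp [wordSharp_mul, wordSharp_of, mul_assoc]
      · subst hv; simp [wordSharp_mul, wordSharp_of, mul_assoc]
  | refl x => exact ConGen.Rel.refl _
  | symm _ ih => exact ih.symm
  | trans _ _ ih1 ih2 => exact ih1.trans ih2
  | mul _ _ ih1 ih2 =>
    rw [wordSharp_mul, wordSharp_mul]
    exact ConGen.Rel.mul ih2 ih1

/-- Schützenberger's involution `♯` on the hypoplactic monoid of rank `n`. -/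
def hypoSharp (n : ℕ) : Hypo n → Hypo n :=
  Quotient.map' (wordSharp n) fun _ _ h => wordSharp_wd h

/-!
Composing an involution `*` with `♯` gives an automorphism `x ↦ (x♯)*` of `hypo_n`, so it
suffices to show that `hypo_n` has only the trivial automorphism. Since the evaluation of a
word is an invariant, the irreducible elements of `hypo_n` are exactly the letters, so an
automorphism is induced by a permutation `σ` of `A_n`. If `a < c` but `σa = σc + 1`, applying the
automorphism to `aca = caa` and using `σa σc σa = σa σa σc` identifies `σc σa σa` with
`σa σa σc`, although only the latter has a `σa`-`σc` inversion. Hence `σ⁻¹` is increasing on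
consecutive letters, so `σ` is the identity.
-/

open FreeMonoid List

theorem List.pair_sublist_cons_iff {α : Type*} {q p a : α} {l : List α} :
    [q, p] <+ a :: l ↔ (q = a ∧ p ∈ l) ∨ [q, p] <+ l := by
  simp [sublist_cons_iff, or_comm]

theorem List.pair_sublist_append_iff {α : Type*} {q p : α} {l₁ l₂ : List α} :
    [q, p] <+ l₁ ++ l₂ ↔ [q, p] <+ l₁ ∨ [q, p] <+ l₂ ∨ (q ∈ l₁ ∧ p ∈ l₂) := by
  induction l₁ with
  | nil => simp
  | cons a l ih =>
    simp only [cons_append, pair_sublist_cons_iff, ih, mem_append, mem_cons]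
    tauto

theorem wordSharp_wordSharp {n : ℕ} (w : FreeMonoid (Fin n)) :
    wordSharp n (wordSharp n w) = w := by
  simp [wordSharp, List.map_reverse, Function.comp_def]

theorem hypoSharp_coe {n : ℕ} (w : FreeMonoid (Fin n)) :
    hypoSharp n (w : Hypo n) = (wordSharp n w : Hypo n) := rfl

theorem hypoSharp_involutive (n : ℕ) : Function.Involutive (hypoSharp n) := by
  intro x
  induction x using Con.induction_on with | _ w =>
  rw [hypoSharp_coe, hypoSharp_coe, wordSharp_wordSharp]

theorem hypoSharp_mul {n : ℕ} (x y : Hypo n) :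
    hypoSharp n (x * y) = hypoSharp n y * hypoSharp n x := by
  induction x using Con.induction_on with | _ u =>
  induction y using Con.induction_on with | _ v =>
  rw [← Con.coe_mul, hypoSharp_coe, hypoSharp_coe, hypoSharp_coe, wordSharp_mul, Con.coe_mul]

namespace Hypo

/-- `[q, p] <+ w` says that some `q` precedes the last `p` in `w`; for `q = p + 1` this is
a `q`-`p` inversion. -/
def invariantCon (n : ℕ) : Con (FreeMonoid (Fin n)) where
  r u v := (u.toList : Multiset (Fin n)) = v.toList ∧
    ∀ p q : Fin n, q.val = p.val + 1 → ([q, p] <+ u.toList ↔ [q, p] <+ v.toList)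
  iseqv :=
    { refl := fun _ => ⟨rfl, fun _ _ _ => Iff.rfl⟩
      symm := fun h => ⟨h.1.symm, fun p q hpq => (h.2 p q hpq).symm⟩
      trans := fun h h' => ⟨h.1.trans h'.1, fun p q hpq => (h.2 p q hpq).trans (h'.2 p q hpq)⟩ }
  mul' := by
    rintro u u' v v' ⟨hu, hu'⟩ ⟨hv, hv'⟩
    refine ⟨?_, fun p q hpq => ?_⟩
    · simp only [toList_mul, ← Multiset.coe_add, hu, hv]
    · simp only [toList_mul, pair_sublist_append_iff, hu' p q hpq, hv' p q hpq,
        ← Multiset.mem_coe, hu, hv]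

theorem hypoCon_le_invariantCon (n : ℕ) : hypoCon n ≤ invariantCon n := by
  refine Con.conGen_le.2 fun u v huv => ⟨?_, fun p q hpq => ?_⟩ <;>
  rcases huv with ⟨a, b, c, hab, hbc, rfl, rfl⟩ | ⟨a, b, c, hab, hbc, rfl, rfl⟩ |
    ⟨a, b, c, d, hab, hbc, hcd, rfl, rfl⟩ | ⟨a, b, c, d, hab, hbc, hcd, rfl, rfl⟩
  all_goals simp only [toList_mul, toList_of, ← Multiset.coe_add, Multiset.coe_singleton]
  any_goals abel
  all_goals
    simp only [cons_append, nil_append, pair_sublist_cons_iff, mem_cons, not_mem_nil, or_false,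
      and_false, sublist_nil, cons_ne_nil]
    simp only [Fin.ext_iff, Fin.le_def, Fin.lt_def] at *
    omega

variable {n : ℕ}

def of (a : Fin n) : Hypo n := (FreeMonoid.of a : FreeMonoid (Fin n))

theorem hom_ext {M : Type*} [Monoid M] {f g : Hypo n →* M} (h : ∀ a, f (of a) = g (of a)) :
    f = g :=
  Con.hom_ext (FreeMonoid.hom_eq h)

def evaluation (x : Hypo n) : Multiset (Fin n) :=
  Con.liftOn x (fun w => (w.toList : Multiset (Fin n))) fun _ _ h =>
    (hypoCon_le_invariantCon n h).1

@[simp]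
theorem evaluation_one : evaluation (1 : Hypo n) = 0 := rfl

@[simp]
theorem evaluation_of (a : Fin n) : evaluation (of a) = {a} := rfl

@[simp]
theorem evaluation_mul (x y : Hypo n) : evaluation (x * y) = evaluation x + evaluation y := by
  induction x using Con.induction_on with | _ u =>
  induction y using Con.induction_on with | _ v =>
  simp [← Con.coe_mul, evaluation]

theorem evaluation_eq_zero_iff {x : Hypo n} : evaluation x = 0 ↔ x = 1 := by
  refine ⟨fun h => ?_, fun h => h ▸ rfl⟩
  induction x using Con.induction_on with | _ w =>
  exact congrArg _ ((Multiset.coe_eq_zero _).1 h : w.toList = [])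

instance : Subsingleton (Hypo n)ˣ :=
  Subsingleton.units_of_isUnit fun x ⟨u, hu⟩ => by
    have := congrArg evaluation u.mul_inv
    rw [evaluation_mul, hu] at this
    exact evaluation_eq_zero_iff.1 (add_eq_zero.1 this).1

theorem of_injective : Function.Injective (of : Fin n → Hypo n) := fun a b h => by
  simpa using congrArg evaluation h

theorem irreducible_of (a : Fin n) : Irreducible (of a) := by
  refine ⟨fun h => by simpa using congrArg evaluation (isUnit_iff_eq_one.1 h),
    fun y z h => ?_⟩
  have hcard := congrArg (Multiset.card ∘ evaluation) h
  simp only [Function.comp_apply, evaluation_of, evaluation_mul, Multiset.card_singleton,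
    Multiset.card_add] at hcard
  simp only [isUnit_iff_eq_one, ← evaluation_eq_zero_iff, ← Multiset.card_eq_zero]
  omega

theorem irreducible_iff_exists_of {x : Hypo n} : Irreducible x ↔ ∃ a, x = of a := by
  refine ⟨fun hx => ?_, fun ⟨a, ha⟩ => ha ▸ irreducible_of a⟩
  induction x using Con.induction_on with | _ w =>
  induction w using FreeMonoid.casesOn with
  | one => exact absurd hx not_irreducible_one
  | of_mul a w =>
    rw [Con.coe_mul] at hx ⊢
    rcases of_irreducible_mul hx with ha | hw
    · exact absurd ha (irreducible_of a).not_isUnit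
    · exact ⟨a, by rw [isUnit_iff_eq_one.1 hw, mul_one]; rfl⟩

theorem of_mul_of_mul_of_left {a c : Fin n} (h : a < c) :
    of a * of c * of a = of c * of a * of a :=
  (hypoCon n).eq.2 (ConGen.Rel.of _ _ (Or.inl ⟨a, a, c, le_rfl, h, rfl, rfl⟩))

theorem of_mul_of_mul_of_right {a b : Fin n} (h : a < b) :
    of b * of a * of b = of b * of b * of a :=
  (hypoCon n).eq.2 (ConGen.Rel.of _ _ (Or.inr (Or.inl ⟨a, b, b, h, le_rfl, rfl, rfl⟩)))

theorem of_mul_of_mul_of_ne {p q : Fin n} (hpq : q.val = p.val + 1) :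
    of p * of q * of q ≠ of q * of q * of p := fun h => by
  have hqp : q ≠ p := fun hqp => by simp [hqp] at hpq
  have := ((hypoCon_le_invariantCon n) ((hypoCon n).eq.1 h)).2 p q hpq
  simp [pair_sublist_cons_iff, hqp, hqp.symm] at this

theorem exists_perm_map_of (f : Hypo n ≃* Hypo n) :
    ∃ σ : Equiv.Perm (Fin n), ∀ a, f (of a) = of (σ a) := by
  have hletter (a : Fin n) : ∃ b, f (of a) = of b :=
    irreducible_iff_exists_of.1 ((MulEquiv.irreducible_iff f).2 (irreducible_of a))
  choose σ hσ using hletter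
  have hσinj : Function.Injective σ := fun a b hab =>
    of_injective (f.injective (by rw [hσ, hσ, hab]))
  exact ⟨Equiv.ofBijective σ hσinj.bijective_of_finite, hσ⟩

theorem lt_of_val_eq_val_add_one (f : Hypo n ≃* Hypo n) {σ : Fin n → Fin n}
    (hσ : ∀ a, f (of a) = of (σ a)) {x y : Fin n} (h : (σ x).val = (σ y).val + 1) : y < x := by
  have hσxy : σ y < σ x := Fin.lt_def.2 (by omega)
  refine lt_of_le_of_ne (not_lt.1 fun hxy => of_mul_of_mul_of_ne h ?_) fun hyx => ?_
  · calc of (σ y) * of (σ x) * of (σ x) = f (of y * of x * of x) := by simp only [map_mul, hσ]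
      _ = f (of x * of y * of x) := by rw [of_mul_of_mul_of_left hxy]
      _ = of (σ x) * of (σ y) * of (σ x) := by simp only [map_mul, hσ]
      _ = of (σ x) * of (σ x) * of (σ y) := of_mul_of_mul_of_right hσxy
  · subst hyx; omega

theorem mulEquiv_eq_refl (f : Hypo n ≃* Hypo n) : f = MulEquiv.refl (Hypo n) := by
  obtain ⟨σ, hσ⟩ := exists_perm_map_of f
  have hmono : StrictMono σ.symm := by
    obtain _ | n := n
    · exact fun i => i.elim0
    · exact Fin.strictMono_iff_lt_succ.2 fun i =>
        lt_of_val_eq_val_add_one f hσ (by simp)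
  have hσ_eq (a : Fin n) : σ a = a := by
    simpa using (congrFun hmono.eq_id (σ a)).symm
  exact MulEquiv.toMonoidHom_injective (hom_ext fun a => by simp [hσ, hσ_eq])

end Hypo

theorem stmt_0_general (n : ℕ) (star : Hypo n → Hypo n)
    (h1 : ∀ x : Hypo n, star (star x) = x)
    (h2 : ∀ x y : Hypo n, star (x * y) = star y * star x) :
    star = hypoSharp n := by
  let f : Hypo n ≃* Hypo n :=
    { toFun := fun x => star (hypoSharp n x)
      invFun := fun x => hypoSharp n (star x)
      left_inv := fun x => by simp only [h1, hypoSharp_involutive n x]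
      right_inv := fun x => by simp only [hypoSharp_involutive n (star x), h1]
      map_mul' := fun x y => by simp only [hypoSharp_mul, h2] }
  funext x
  calc star x = f (hypoSharp n x) := by simp [f, hypoSharp_involutive n x]
    _ = hypoSharp n x := by rw [Hypo.mulEquiv_eq_refl f]; rfl

/-- **Uniqueness of the involution.** For every `n ≥ 1`, Schützenberger's
involution is the only involution on the hypoplactic monoid `hypo_n`: every
unary operation `star` on `hypo_n` with `(x*)* = x` and `(xy)* = y* x*`
coincides with `♯`. -/
theorem stmt_0 (n : ℕ) (hn : 1 ≤ n) (star : Hypo n → Hypo n)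
    (h1 : ∀ x : Hypo n, star (star x) = x)
    (h2 : ∀ x y : Hypo n, star (x * y) = star y * star x) :
    star = hypoSharp n :=
  stmt_0_general n star h1 h2
end

section
/- The map ψ_2 defined on generators by ε ↦ E_5, 1 ↦ diag{s, J, 1}, 2 ↦ diag{1, K, s} (block diagonal matrices with blocks of sizes 1, 3, 1) extends to a faithful representation ψ_2 : (hypo_2, ♯) → (UT_5(𝕊), D); that is, ψ_2 is an injective monoid homomorphism from hypo_2 to UT_5(𝕊) satisfying ψ_2(w^♯) = ψ_2(w)^D for all w ∈ hypo_2. -/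
/-- The skew transposition `(A^D)_{ij} = A_{(m+1−j)(m+1−i)}` (reflection in the
secondary diagonal), an involution of the monoid of upper triangular matrices. -/
def skewT {m : ℕ} {S : Type*} (A : Matrix (Fin m) (Fin m) S) : Matrix (Fin m) (Fin m) S :=
  Matrix.of fun i j => A j.rev i.rev

/-- The matrix with diagonal entries `1` except `s` at the diagonal positions in
`sPos`, off-diagonal entries `1` at the positions in `ones`, and `0` elsewhere. -/
def mkMat (m : ℕ) {S : Type*} [Semiring S] (s : S) (sPos : List ℕ) (ones : List (ℕ × ℕ)) :
    Matrix (Fin m) (Fin m) S :=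
  Matrix.of fun i j =>
    if i = j then (if (i : ℕ) ∈ sPos then s else 1)
    else if ((i : ℕ), (j : ℕ)) ∈ ones then (1 : S) else 0

/-! Write `𝐱, 𝐲` for the generators `1, 2` of `hypo₂` (letters `0, 1 : Fin 2` in the code, where an
inversion of a word `l` is `[1, 0] <+ l`). The relations make `𝐲𝐱` central and give
`𝐲𝐱 · 𝐱𝐲 = 𝐲𝐱 · 𝐲𝐱`, so all letters commute once a factor `𝐲𝐱` is present. Hence an element of
evaluation `(p, q)` is `𝐱ᵖ𝐲^q` if it has no inversion and `𝐲^q𝐱ᵖ` otherwise.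

The matrices `diag{d₀, [[1, a, c], [0, 1, b], [0, 0, 1]], d₄}` multiply by
`(d₀, d₄, a, b, c) · (d₀', d₄', a', b', c') = (d₀d₀', d₄d₄', a + a', b + b', c + ab' + c')`.
So over an idempotent semiring `ψ₂(w)` carries `sᵖ` and `s^q` in its corners and, at position
`(2, 4)`, the indicator of an inversion of `w`. As `s` has infinite order, `ψ₂` separates the
normal forms. -/

open FreeMonoid List

section BlockMatrix

variable {S : Type*}

def blockMat [Zero S] [One S] (d₀ d₄ a b c : S) : Matrix (Fin 5) (Fin 5) S :=
  !![d₀, 0, 0, 0, 0;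
     0, 1, a, c, 0;
     0, 0, 1, b, 0;
     0, 0, 0, 1, 0;
     0, 0, 0, 0, d₄]

theorem blockMat_mul [Semiring S] (d₀ d₄ a b c d₀' d₄' a' b' c' : S) :
    blockMat d₀ d₄ a b c * blockMat d₀' d₄' a' b' c' =
      blockMat (d₀ * d₀') (d₄ * d₄') (a + a') (b + b') (c + a * b' + c') := by
  ext i j
  fin_cases i <;> fin_cases j <;> simp [blockMat, Matrix.mul_apply, Fin.sum_univ_five] <;> abel

theorem blockMat_one [Semiring S] : blockMat (1 : S) 1 0 0 0 = 1 := by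
  ext i j
  fin_cases i <;> fin_cases j <;> simp [blockMat]

theorem blockMat_apply_of_lt [Zero S] [One S] (d₀ d₄ a b c : S) {i j : Fin 5} (h : j < i) :
    blockMat d₀ d₄ a b c i j = 0 := by
  fin_cases i <;> fin_cases j <;> first | exact absurd h (by decide) | rfl

theorem skewT_blockMat [Zero S] [One S] (d₀ d₄ a b c : S) :
    skewT (blockMat d₀ d₄ a b c) = blockMat d₄ d₀ b a c := by
  ext i j
  fin_cases i <;> fin_cases j <;> rfl

theorem mkMat_eq_blockMat_zero [Semiring S] (s : S) :
    mkMat 5 s [0] [(2, 3)] = blockMat s 1 0 1 0 := by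
  ext i j
  fin_cases i <;> fin_cases j <;> simp [mkMat, blockMat]

theorem mkMat_eq_blockMat_one [Semiring S] (s : S) :
    mkMat 5 s [4] [(1, 2)] = blockMat 1 s 1 0 0 := by
  ext i j
  fin_cases i <;> fin_cases j <;> simp [mkMat, blockMat]

end BlockMatrix

theorem skewT_one {m : ℕ} {S : Type*} [Zero S] [One S] :
    skewT (1 : Matrix (Fin m) (Fin m) S) = 1 := by
  ext i j
  simp [skewT, Matrix.one_apply, eq_comm]

theorem skewT_mul {m : ℕ} {S : Type*} [CommSemiring S] (A B : Matrix (Fin m) (Fin m) S) :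
    skewT (A * B) = skewT B * skewT A := by
  ext i j
  simp only [skewT, Matrix.mul_apply, Matrix.of_apply]
  exact Fintype.sum_equiv Fin.revPerm _ _ fun k => by simp [mul_comm]

theorem mul_pow_mul_pow_comm {M : Type*} [Monoid M] {c x y : M} (hx : Commute c x)
    (hy : Commute c y) (hxy : c * x * y = c * y * x) (p q : ℕ) :
    c * y ^ q * x ^ p = c * x ^ p * y ^ q := by
  have hy_x_pow : ∀ k : ℕ, c * y * x ^ k = c * x ^ k * y := by
    intro k
    induction k with
    | zero => simp
    | succ k ih =>
      calc c * y * x ^ (k + 1) = c * x ^ k * y * x := by rw [pow_succ, ← mul_assoc, ih]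
        _ = x ^ k * (c * y * x) := by rw [(hx.pow_right k).eq]; simp only [mul_assoc]
        _ = c * x ^ (k + 1) * y := by
          rw [← hxy, ← mul_assoc, ← mul_assoc, ← (hx.pow_right k).eq, pow_succ]
          simp only [mul_assoc]
  induction q with
  | zero => simp
  | succ q ih =>
    calc c * y ^ (q + 1) * x ^ p = y ^ q * (c * y * x ^ p) := by
          rw [pow_succ, ← mul_assoc, (hy.pow_right q).eq]; simp only [mul_assoc]
      _ = c * x ^ p * y ^ (q + 1) := by
          rw [hy_x_pow, ← mul_assoc, ← mul_assoc, ← (hy.pow_right q).eq, ih, pow_succ]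
          simp only [mul_assoc]

theorem mk'_eq_of_hypoRel {n : ℕ} {u v : FreeMonoid (Fin n)} (h : HypoRel n u v) :
    (hypoCon n).mk' u = (hypoCon n).mk' v :=
  (hypoCon n).eq.mpr (ConGen.Rel.of u v h)

namespace Hypo2

local notation "𝐱" => Con.mk' (hypoCon 2) (of (0 : Fin 2))
local notation "𝐲" => Con.mk' (hypoCon 2) (of (1 : Fin 2))

theorem commute_yx_x : Commute (𝐲 * 𝐱) 𝐱 := by
  have h : 𝐱 * 𝐲 * 𝐱 = 𝐲 * 𝐱 * 𝐱 := by
    simpa using mk'_eq_of_hypoRel (n := 2) (Or.inl ⟨0, 0, 1, le_rfl, Fin.zero_lt_one, rfl, rfl⟩)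
  rw [commute_iff_eq, ← h, mul_assoc]

theorem commute_yx_y : Commute (𝐲 * 𝐱) 𝐲 := by
  have h : 𝐲 * 𝐱 * 𝐲 = 𝐲 * 𝐲 * 𝐱 := by
    simpa using
      mk'_eq_of_hypoRel (n := 2) (Or.inr (Or.inl ⟨0, 1, 1, Fin.zero_lt_one, le_rfl, rfl, rfl⟩))
  rw [commute_iff_eq, h, mul_assoc]

theorem yx_mul_xy : 𝐲 * 𝐱 * 𝐱 * 𝐲 = 𝐲 * 𝐱 * 𝐲 * 𝐱 := by
  have h : 𝐲 * 𝐱 * 𝐲 * 𝐱 = 𝐱 * 𝐲 * 𝐱 * 𝐲 := by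
    simpa using mk'_eq_of_hypoRel (n := 2)
      (Or.inr (Or.inr (Or.inl ⟨0, 0, 1, 1, le_rfl, Fin.zero_lt_one, le_rfl, rfl, rfl⟩)))
  rw [h, commute_yx_x.eq]
  simp only [mul_assoc]

theorem y_pow_mul_x_pow (p q : ℕ) : 𝐲 ^ (q + 1) * 𝐱 ^ (p + 1) = 𝐲 * 𝐱 * 𝐱 ^ p * 𝐲 ^ q := by
  rw [← mul_pow_mul_pow_comm commute_yx_x commute_yx_y yx_mul_xy, (commute_yx_y.pow_right q).eq,
    pow_succ, pow_succ']
  simp only [mul_assoc]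

theorem mk'_ofList (l : List (Fin 2)) : (hypoCon 2).mk' (ofList l) =
    if [1, 0] <+ l then 𝐲 ^ l.count 1 * 𝐱 ^ l.count 0 else 𝐱 ^ l.count 0 * 𝐲 ^ l.count 1 := by
  induction l with
  | nil => simp
  | cons a t ih =>
    rw [ofList_cons, map_mul, ih]
    fin_cases a
    · have hinv : [1, 0] <+ 0 :: t ↔ [1, 0] <+ t := by simp [sublist_cons_iff]
      simp only [Fin.zero_eta, hinv, count_cons_self,
        count_cons_of_ne (by decide : (0 : Fin 2) ≠ 1)]
      split_ifs with h
      · obtain ⟨p, hp⟩ := Nat.exists_eq_add_one.mpr (h.count_le 0)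
        obtain ⟨q, hq⟩ := Nat.exists_eq_add_one.mpr (h.count_le 1)
        rw [hp, hq, y_pow_mul_x_pow, y_pow_mul_x_pow, ← mul_assoc, ← mul_assoc, ← commute_yx_x.eq,
          pow_succ']
        simp only [mul_assoc]
      · rw [pow_succ', mul_assoc]
    · have hinv : [1, 0] <+ 1 :: t ↔ [1, 0] <+ t ∨ 0 ∈ t := by simp [sublist_cons_iff]
      simp only [Fin.mk_one, hinv, count_cons_self,
        count_cons_of_ne (by decide : (1 : Fin 2) ≠ 0)]
      by_cases h : [1, 0] <+ t
      · rw [if_pos h, if_pos (Or.inl h), pow_succ', mul_assoc]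
      by_cases h0 : 0 ∈ t
      · obtain ⟨p, hp⟩ := Nat.exists_eq_add_one.mpr (count_pos_iff.mpr h0)
        rw [if_neg h, if_pos (Or.inr h0), hp, y_pow_mul_x_pow, pow_succ']
        simp only [mul_assoc]
      · rw [if_neg h, if_neg (by tauto), count_eq_zero.mpr h0]
        simp [pow_succ']

theorem hypoRel_perm_and_sublist_iff {u v : FreeMonoid (Fin 2)} (h : HypoRel 2 u v) :
    u.toList ~ v.toList ∧ ([1, 0] <+ u.toList ↔ [1, 0] <+ v.toList) := by
  rcases h with ⟨a, b, c, hab, hbc, rfl, rfl⟩ | ⟨a, b, c, hab, hbc, rfl, rfl⟩ |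
    ⟨a, b, c, d, hab, hbc, hcd, rfl, rfl⟩ | ⟨a, b, c, d, hab, hbc, hcd, -, -⟩
  · obtain ⟨rfl, rfl, rfl⟩ : a = 0 ∧ b = 0 ∧ c = 1 := by omega
    decide
  · obtain ⟨rfl, rfl, rfl⟩ : a = 0 ∧ b = 1 ∧ c = 1 := by omega
    decide
  · obtain ⟨rfl, rfl, rfl, rfl⟩ : a = 0 ∧ b = 0 ∧ c = 1 ∧ d = 1 := by omega
    decide
  · omega

section Representation

variable {S : Type*} [Semiring S]

def wordRep (s : S) : FreeMonoid (Fin 2) →* Matrix (Fin 5) (Fin 5) S :=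
  FreeMonoid.lift ![blockMat s 1 0 1 0, blockMat 1 s 1 0 0]

theorem wordRep_ofList (h : (1 : S) + 1 = 1) (s : S) (l : List (Fin 2)) :
    wordRep s (ofList l) = blockMat (s ^ l.count 0) (s ^ l.count 1)
      (if 1 ∈ l then 1 else 0) (if 0 ∈ l then 1 else 0) (if [1, 0] <+ l then 1 else 0) := by
  induction l with
  | nil => simp [blockMat_one]
  | cons a t ih =>
    rw [ofList_cons, map_mul, ih]
    fin_cases a <;> simp [wordRep, blockMat_mul, sublist_cons_iff, pow_succ'] <;>
      split_ifs <;> simp_all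

theorem wordRep_eq_of_perm (h : (1 : S) + 1 = 1) (s : S) {l l' : List (Fin 2)} (hp : l ~ l')
    (hinv : [1, 0] <+ l ↔ [1, 0] <+ l') : wordRep s (ofList l) = wordRep s (ofList l') := by
  simp only [wordRep_ofList h, hp.count_eq, hp.mem_iff, hinv]

theorem hypoCon_le_ker_wordRep (h : (1 : S) + 1 = 1) (s : S) : hypoCon 2 ≤ Con.ker (wordRep s) :=
  Con.conGen_le.mpr fun _ _ huv =>
    wordRep_eq_of_perm h s (hypoRel_perm_and_sublist_iff huv).1
      (hypoRel_perm_and_sublist_iff huv).2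

def rep (h : (1 : S) + 1 = 1) (s : S) : Hypo 2 →* Matrix (Fin 5) (Fin 5) S :=
  (hypoCon 2).lift (wordRep s) (hypoCon_le_ker_wordRep h s)

theorem rep_injective (h : (1 : S) + 1 = 1) {s : S} (hs : ∀ i j : ℕ, s ^ i = s ^ j → i = j) :
    Function.Injective (rep h s) := by
  have h10 : (1 : S) ≠ 0 := fun h10 => by
    simpa using hs 0 1 (by rw [pow_zero, pow_one, ← mul_one s, h10, mul_zero])
  intro u v huv
  obtain ⟨u, rfl⟩ := (hypoCon 2).mk'_surjective u
  obtain ⟨v, rfl⟩ := (hypoCon 2).mk'_surjective v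
  rw [← ofList_toList u, ← ofList_toList v] at huv ⊢
  simp only [rep, Con.lift_mk', wordRep_ofList h] at huv
  have h0 : u.toList.count 0 = v.toList.count 0 :=
    hs _ _ (by simpa [blockMat] using congrFun₂ huv 0 0)
  have h1 : u.toList.count 1 = v.toList.count 1 :=
    hs _ _ (by simpa [blockMat] using congrFun₂ huv 4 4)
  have hinv : [1, 0] <+ u.toList ↔ [1, 0] <+ v.toList := by
    have h13 : (if [1, 0] <+ u.toList then (1 : S) else 0) = if [1, 0] <+ v.toList then 1 else 0 :=
      congrFun₂ huv 1 3
    split_ifs at h13 <;> simp_all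
  rw [mk'_ofList, mk'_ofList, h0, h1, if_congr hinv rfl rfl]

end Representation

theorem wordRep_wordSharp {S : Type*} [CommSemiring S] (s : S) (w : FreeMonoid (Fin 2)) :
    wordRep s (wordSharp 2 w) = skewT (wordRep s w) := by
  induction w using FreeMonoid.inductionOn' with
  | one => simp [wordSharp, skewT_one]
  | of_mul a w ih =>
    rw [wordSharp_mul, map_mul, map_mul, skewT_mul, ih, wordSharp_of]
    fin_cases a <;> simp [wordRep, skewT_blockMat]

end Hypo2

/-- **Theorem 3.1.** The map `ψ₂` defined on the generators of `hypo₂` by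
`1 ↦ diag{s, J, 1}` and `2 ↦ diag{1, K, s}` extends to a faithful representation
`ψ₂ : (hypo₂, ♯) → (UT₅(𝕊), ᴰ)`: an injective monoid homomorphism into upper
triangular `5 × 5` matrices over any commutative idempotent semiring `𝕊`
containing an element `s` of infinite multiplicative order, intertwining
Schützenberger's involution with the skew transposition. -/
theorem stmt_1 {S : Type*} [CommSemiring S] (hidem : ∀ a : S, a + a = a)
    (s : S) (hs : ∀ i j : ℕ, s ^ i = s ^ j → i = j) :
    ∃ ψ : Hypo 2 →* Matrix (Fin 5) (Fin 5) S,
      Function.Injective ψ ∧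
      (∀ w : Hypo 2, ∀ i j : Fin 5, j < i → ψ w i j = 0) ∧
      (∀ w : Hypo 2, ψ (hypoSharp 2 w) = skewT (ψ w)) ∧
      ψ ((hypoCon 2).mk' (FreeMonoid.of 0)) = mkMat 5 s [0] [(2, 3)] ∧
      ψ ((hypoCon 2).mk' (FreeMonoid.of 1)) = mkMat 5 s [4] [(1, 2)] := by
  have h := hidem 1
  refine ⟨Hypo2.rep h s, Hypo2.rep_injective h hs, ?_, ?_, ?_, ?_⟩
  · intro w i j hij
    obtain ⟨u, rfl⟩ := (hypoCon 2).mk'_surjective w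
    rw [Hypo2.rep, Con.lift_mk', ← ofList_toList u, Hypo2.wordRep_ofList h]
    exact blockMat_apply_of_lt _ _ _ _ _ hij
  · intro w
    obtain ⟨u, rfl⟩ := (hypoCon 2).mk'_surjective w
    exact Hypo2.wordRep_wordSharp s u
  · simp [Hypo2.rep, Hypo2.wordRep, mkMat_eq_blockMat_zero]
  · simp [Hypo2.rep, Hypo2.wordRep, mkMat_eq_blockMat_one]
end

section
/- A word identity u ≈ v holds in the involution monoid (A, *) if and only if u ≈ v is balanced, i.e. occ(x, u) = occ(x, v) for every variable x ∈ X ∪ X*. -/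
/-- Variables: `(n, false)` is the plain variable `x_n`, `(n, true)` is the starred
variable `x_n*`. -/
abbrev Var : Type := ℕ × Bool
/-- A word over the variables `X ∪ X*`. -/
abbrev Word : Type := List Var

/-- The starred counterpart of a variable. -/
def vstar (x : Var) : Var := (x.1, !x.2)

def evalVar {M : Type*} [Monoid M] (star : M → M) (φ : ℕ → M) (x : Var) : M :=
  if x.2 then star (φ x.1) else φ x.1

/-- Evaluation of a word in a monoid `M` equipped with a unary operation `star`,
under a substitution `φ : X → M` (extended by `φ(x*) = φ(x)*`). -/
def evalW {M : Type*} [Monoid M] (star : M → M) (φ : ℕ → M) (w : Word) : M :=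
  (w.map (evalVar star φ)).prod

/-- `(M, star)` satisfies the word identity `u ≈ v`. -/
def SatW {M : Type*} [Monoid M] (star : M → M) (u v : Word) : Prop :=
  ∀ φ : ℕ → M, evalW star φ u = evalW star φ v

/-- `x ∈ X ∪ X*` occurs the same number of times in `u` and in `v`. -/
def BalancedId (u v : Word) : Prop := ∀ x : Var, u.count x = v.count x

/-- The free commutative monoid `A = ⟨a, b | ab = ba⟩ = {a^m b^n}` on two
generators, modelled as `Multiplicative (ℕ × ℕ)`. -/
abbrev Amon : Type := Multiplicative (ℕ × ℕ)

/-- The involution `(a^m b^n)* = a^n b^m` on `A`. -/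
def Astar : Amon → Amon :=
  fun p => Multiplicative.ofAdd ((Multiplicative.toAdd p).2, (Multiplicative.toAdd p).1)

/-! A balanced identity relates two rearrangements of one word, and those have the same value in
any commutative monoid. Conversely, substituting `a` for `x` and `1` for every other variable
evaluates a word to `a^m b^n`, where `m` and `n` count the occurrences of `x` and of `x*`. -/

theorem BalancedId.perm {u v : Word} (h : BalancedId u v) : u.Perm v :=
  List.perm_iff_count.mpr h

theorem evalW_eq_of_perm {M : Type*} [CommMonoid M] (star : M → M) (φ : ℕ → M) {u v : Word}
    (h : u.Perm v) : evalW star φ u = evalW star φ v :=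
  (h.map _).prod_eq

theorem BalancedId.satW {M : Type*} [CommMonoid M] (star : M → M) {u v : Word}
    (h : BalancedId u v) : SatW star u v :=
  fun φ => evalW_eq_of_perm star φ h.perm

theorem evalW_cons {M : Type*} [Monoid M] (star : M → M) (φ : ℕ → M) (x : Var) (w : Word) :
    evalW star φ (x :: w) = evalVar star φ x * evalW star φ w := by
  simp only [evalW, List.map_cons, List.prod_cons]

theorem toAdd_evalVar_mulSingle (n : ℕ) (x : Var) :
    Multiplicative.toAdd (evalVar Astar (Pi.mulSingle n (Multiplicative.ofAdd (1, 0))) x)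
      = (if x = (n, false) then 1 else 0, if x = (n, true) then 1 else 0) := by
  obtain ⟨m, b⟩ := x
  by_cases hm : m = n
  · subst hm
    cases b <;> simp [evalVar, Astar]
  · cases b <;> simp [evalVar, Astar, hm, Prod.ext_iff]

theorem toAdd_evalW_mulSingle (n : ℕ) (w : Word) :
    Multiplicative.toAdd (evalW Astar (Pi.mulSingle n (Multiplicative.ofAdd (1, 0))) w)
      = (w.count (n, false), w.count (n, true)) := by
  induction w with
  | nil => rfl
  | cons x w ih =>
    rw [evalW_cons, toAdd_mul, ih, toAdd_evalVar_mulSingle]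
    simp only [List.count_cons, beq_iff_eq, Prod.mk_add_mk]
    split_ifs <;> simp_all [add_comm]

theorem BalancedId.of_satW_Astar {u v : Word} (h : SatW Astar u v) : BalancedId u v := by
  rintro ⟨n, b⟩
  have hcounts := congrArg Multiplicative.toAdd (h (Pi.mulSingle n (Multiplicative.ofAdd (1, 0))))
  rw [toAdd_evalW_mulSingle, toAdd_evalW_mulSingle, Prod.mk.injEq] at hcounts
  cases b
  · exact hcounts.1
  · exact hcounts.2

theorem stmt_7_general (u v : Word) :
    SatW Astar u v ↔ BalancedId u v :=
  ⟨BalancedId.of_satW_Astar, fun h => h.satW Astar⟩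

/-- **Theorem 4.2.** A word identity `u ≈ v` holds in the involution monoid
`(A, *)` if and only if it is balanced. -/
theorem stmt_7 (u v : Word) (hu : u ≠ []) (hv : v ≠ []) :
    SatW Astar u v ↔ BalancedId u v :=
  stmt_7_general u v
end

section
/- A word identity u ≈ v holds in the involution monoid (C, *) if and only if: (i) con(u) = con(v), ml(u) = ml(v), lin(u) = lin(v); and (ii) for any x, y ∈ con(u), x ≺_u y iff x ≺_v y. -/
/-- `Prec u x y` : the last occurrence of `x` precedes the first occurrence of `y`
in `u` (every occurrence of `x` is to the left of every occurrence of `y`). -/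
def Prec (u : Word) (x y : Var) : Prop :=
  ∀ i j : Fin u.length, u.get i = x → u.get j = y → (i : ℕ) < (j : ℕ)

/-- `{xs} ≺_u {ys}` : pairwise `Prec`. -/
def PrecAll (u : Word) (xs ys : List Var) : Prop :=
  ∀ x ∈ xs, ∀ y ∈ ys, Prec u x y

/-- `x ∈ mix(u)` : both `x` and `x*` occur in `u`. -/
def Mix (u : Word) (x : Var) : Prop := x ∈ u ∧ vstar x ∈ u
/-- `x ∈ lin(u)` : `x ∉ mix(u)` and `x` occurs exactly once in `u`. -/
def Lin (u : Word) (x : Var) : Prop := ¬ Mix u x ∧ u.count x = 1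
/-- `x ∈ ml(u)` : `x ∈ mix(u)` and `x` occurs exactly once in `u`. -/
def Ml (u : Word) (x : Var) : Prop := Mix u x ∧ u.count x = 1
/-- Condition (ii) from the characterizations: for any `x, y ∈ con(u)`,
(a) if `x, y ∈ mix(u)` then `{x,y} ≺_u {x*,y*}` iff `{x,y} ≺_v {x*,y*}`;
(b) if `x ∈ mix(u)`, `y ∉ mix(u)` then `x ≺_u {x*,y}` iff `x ≺_v {x*,y}` and
`{x,y} ≺_u x*` iff `{x,y} ≺_v x*`;
(c) if `x, y ∉ mix(u)` then `x ≺_u y` iff `x ≺_v y`. -/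
def CondII (u v : Word) : Prop :=
  ∀ x y : Var, x ∈ u → y ∈ u →
    ((Mix u x ∧ Mix u y →
      (PrecAll u [x, y] [vstar x, vstar y] ↔ PrecAll v [x, y] [vstar x, vstar y])) ∧
     (Mix u x ∧ ¬ Mix u y →
      ((PrecAll u [x] [vstar x, y] ↔ PrecAll v [x] [vstar x, y]) ∧
       (PrecAll u [x, y] [vstar x] ↔ PrecAll v [x, y] [vstar x]))) ∧
     (¬ Mix u x ∧ ¬ Mix u y → (Prec u x y ↔ Prec v x y)))

open FreeMonoid in
/-- Defining relations of `A_0^1` (letters `0 = a`, `1 = b`):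
`a² = a`, `b² = b`, `aba = ba`, `bab = ba`. -/
def A01Rel : FreeMonoid (Fin 2) → FreeMonoid (Fin 2) → Prop := fun u v =>
  (u = of 0 * of 0 ∧ v = of 0) ∨
  (u = of 1 * of 1 ∧ v = of 1) ∨
  (u = of 0 * of 1 * of 0 ∧ v = of 1 * of 0) ∨
  (u = of 1 * of 0 * of 1 ∧ v = of 1 * of 0)

/-- The 5-element monoid `A_0^1 = {1, a, b, ab, ba}`. -/
abbrev A01 : Type := (conGen A01Rel).Quotient

/-- The involution on words over `{a, b}`: reverse the word and interchange
`a` and `b` (in the quotient it fixes `1`, `ab` and `ba`). -/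
def a01WordStar (w : FreeMonoid (Fin 2)) : FreeMonoid (Fin 2) :=
  FreeMonoid.ofList (((FreeMonoid.toList w).map Fin.rev).reverse)

theorem a01WordStar_mul (u v : FreeMonoid (Fin 2)) :
    a01WordStar (u * v) = a01WordStar v * a01WordStar u := by
  simp [a01WordStar]

theorem a01WordStar_wd {u v : FreeMonoid (Fin 2)} (h : conGen A01Rel u v) :
    conGen A01Rel (a01WordStar u) (a01WordStar v) := by
  have h' : ConGen.Rel A01Rel u v := h
  clear h
  show ConGen.Rel A01Rel (a01WordStar u) (a01WordStar v)
  induction h' with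
  | of u v huv =>
    apply ConGen.Rel.of
    rcases huv with ⟨hu,hv⟩|⟨hu,hv⟩|⟨hu,hv⟩|⟨hu,hv⟩ <;> subst hu <;> subst hv
    · exact Or.inr (Or.inl ⟨rfl, rfl⟩)
    · exact Or.inl ⟨rfl, rfl⟩
    · exact Or.inr (Or.inr (Or.inr ⟨rfl, rfl⟩))
    · exact Or.inr (Or.inr (Or.inl ⟨rfl, rfl⟩))
  | refl x => exact ConGen.Rel.refl _
  | symm _ ih => exact ih.symm
  | trans _ _ ih1 ih2 => exact ih1.trans ih2
  | mul _ _ ih1 ih2 =>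
    rw [a01WordStar_mul, a01WordStar_mul]
    exact ConGen.Rel.mul ih2 ih1

/-- The involution `*` of the involution monoid `(A_0^1, *)`. -/
def A01star : A01 → A01 :=
  Quotient.map' a01WordStar fun _ _ h => a01WordStar_wd h

/-- The 25-element monoid `C = A_0^1 × A_0^1`. -/
abbrev Cmon : Type := A01 × A01

/-- The involution `(x, y)* = (y*, x*)` on `C`. -/
def Cstar : Cmon → Cmon := fun p => (A01star p.2, A01star p.1)

section MonoidIdentities

variable {α : Type*}

def MonoidSatisfies (M : Type*) [Monoid M] (u v : List α) : Prop :=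
  ∀ f : α → M, (u.map f).prod = (v.map f).prod

theorem MonoidSatisfies.of_mulEquiv {M N : Type*} [Monoid M] [Monoid N] (e : M ≃* N)
    {u v : List α} (h : MonoidSatisfies M u v) : MonoidSatisfies N u v := by
  intro g
  have key : ∀ w : List α, e ((w.map (e.symm ∘ g)).prod) = (w.map g).prod := fun w => by
    rw [map_list_prod, List.map_map, ← Function.comp_assoc, e.self_comp_symm, Function.id_comp]
  rw [← key u, ← key v, h]

theorem MonoidSatisfies.congr_mulEquiv {M N : Type*} [Monoid M] [Monoid N] (e : M ≃* N)
    {u v : List α} : MonoidSatisfies M u v ↔ MonoidSatisfies N u v :=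
  ⟨.of_mulEquiv e, .of_mulEquiv e.symm⟩

def SameShortSubwords (u v : List α) : Prop :=
  (∀ x, x ∈ u ↔ x ∈ v) ∧ ∀ x y, [x, y].Sublist u ↔ [x, y].Sublist v

end MonoidIdentities

theorem satW_prod_swap_iff {M : Type*} [Monoid M] {s : M → M} (hs : Function.Involutive s)
    (u v : Word) :
    SatW (fun p : M × M => (s p.2, s p.1)) u v ↔ MonoidSatisfies M u v := by
  set t : M × M → M × M := fun p => (s p.2, s p.1)
  have fst_evalW : ∀ φ w, (evalW t φ w).1 = (w.map fun x => (evalVar t φ x).1).prod :=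
    fun φ w => (map_list_prod (MonoidHom.fst M M) _).trans (by rw [List.map_map]; rfl)
  have snd_evalW : ∀ φ w, (evalW t φ w).2 = (w.map fun x => (evalVar t φ x).2).prod :=
    fun φ w => (map_list_prod (MonoidHom.snd M M) _).trans (by rw [List.map_map]; rfl)
  constructor
  · intro h f
    -- the first coordinate of `φ n` carries `f x_n`, the second `(f x_n*)*`
    let φ : ℕ → M × M := fun n => (f (n, false), s (f (n, true)))
    have hφ : (fun x => (evalVar t φ x).1) = f := by
      funext ⟨n, b⟩
      cases b
      · rfl
      · exact hs _
    simpa only [fst_evalW, hφ] using congrArg Prod.fst (h φ)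
  · intro h φ
    exact Prod.ext (by rw [fst_evalW, fst_evalW, h]) (by rw [snd_evalW, snd_evalW, h])

inductive A01Model : Type
  | one | a | b | ab | ba
  deriving DecidableEq

namespace A01Model

instance : Fintype A01Model :=
  Fintype.ofList [one, a, b, ab, ba] fun x => by cases x <;> simp

def mul : A01Model → A01Model → A01Model
  | one, x => x
  | x, one => x
  | ba, _ => ba
  | _, ba => ba
  | a, a => a
  | a, b => ab
  | a, ab => ab
  | b, a => ba
  | b, b => b
  | b, ab => ba
  | ab, a => ba
  | ab, b => ab
  | ab, ab => ba

instance : Monoid A01Model where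
  mul := mul
  one := one
  mul_assoc := by decide
  one_mul := by decide
  mul_one := by decide

theorem mul_def (x y : A01Model) : x * y = mul x y := rfl

def hasA : A01Model → Bool
  | a | ab | ba => true
  | _ => false

def hasB : A01Model → Bool
  | b | ab | ba => true
  | _ => false

theorem hasA_mul (x y : A01Model) : hasA (x * y) = (hasA x || hasA y) := by
  revert x y; decide

theorem hasB_mul (x y : A01Model) : hasB (x * y) = (hasB x || hasB y) := by
  revert x y; decide

theorem mul_eq_ba_iff (x y : A01Model) :
    x * y = ba ↔ x = ba ∨ y = ba ∨ (hasB x ∧ hasA y) := by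
  revert x y; decide

theorem eq_of_hasA_hasB {x y : A01Model} (hba : x = ba ↔ y = ba) (ha : hasA x = hasA y)
    (hb : hasB x = hasB y) : x = y := by
  revert x y; decide

section ListProducts

variable {α : Type*} (f : α → A01Model)

theorem hasA_prod_map (w : List α) : hasA (w.map f).prod ↔ ∃ z ∈ w, hasA (f z) := by
  induction w with
  | nil => simp [show hasA 1 = false from rfl]
  | cons x w ih => simp [hasA_mul, ih]

theorem hasB_prod_map (w : List α) : hasB (w.map f).prod ↔ ∃ z ∈ w, hasB (f z) := by
  induction w with
  | nil => simp [show hasB 1 = false from rfl]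
  | cons x w ih => simp [hasB_mul, ih]

theorem prod_map_eq_ba_iff (w : List α) : (w.map f).prod = ba ↔
    (∃ z ∈ w, f z = ba) ∨ ∃ z z', [z, z'].Sublist w ∧ hasB (f z) ∧ hasA (f z') := by
  induction w with
  | nil => simp
  | cons x w ih =>
    simp only [List.map_cons, List.prod_cons, mul_eq_ba_iff, ih, hasA_prod_map,
      List.sublist_cons_iff]
    aesop

theorem prod_map_eq_of_sameShortSubwords {u v : List α} (h : SameShortSubwords u v) :
    (u.map f).prod = (v.map f).prod := by
  obtain ⟨hmem, hpair⟩ := h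
  refine eq_of_hasA_hasB ?_ ?_ ?_
  · simp only [prod_map_eq_ba_iff, hmem, hpair]
  · rw [Bool.eq_iff_iff, hasA_prod_map, hasA_prod_map]
    simp only [hmem]
  · rw [Bool.eq_iff_iff, hasB_prod_map, hasB_prod_map]
    simp only [hmem]

end ListProducts

def ofFlags : Bool → Bool → A01Model
  | false, false => one
  | true, false => a
  | false, true => b
  | true, true => ab

@[simp] theorem hasA_ofFlags (p q : Bool) : hasA (ofFlags p q) = p := by
  revert p q; decide

@[simp] theorem hasB_ofFlags (p q : Bool) : hasB (ofFlags p q) = q := by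
  revert p q; decide

@[simp] theorem ofFlags_ne_ba (p q : Bool) : ofFlags p q ≠ ba := by
  revert p q; decide

theorem monoidSatisfies_iff_sameShortSubwords {α : Type*} [DecidableEq α] {u v : List α} :
    MonoidSatisfies A01Model u v ↔ SameShortSubwords u v := by
  refine ⟨fun h => ⟨fun x => ?_, fun x y => ?_⟩, fun h f => prod_map_eq_of_sameShortSubwords f h⟩
  · -- substitute `a` for `x` and `1` for every other letter
    have := Bool.eq_iff_iff.mp <| congrArg hasA (h fun z => ofFlags (decide (z = x)) false)
    simpa [hasA_prod_map] using this
  · -- substitute `b` for `x`, `a` for `y` (`ab` if `x = y`) and `1` for every other letter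
    have := congrArg (· = ba) (h fun z => ofFlags (decide (z = y)) (decide (z = x)))
    simpa [prod_map_eq_ba_iff] using this

end A01Model

namespace A01

def a : A01 := (FreeMonoid.of 0 : FreeMonoid (Fin 2))

def b : A01 := (FreeMonoid.of 1 : FreeMonoid (Fin 2))

theorem coe_eq_of_rel {u v : FreeMonoid (Fin 2)} (h : A01Rel u v) : (u : A01) = v :=
  (Con.eq _).2 (ConGen.Rel.of _ _ h)

theorem a_mul_a : a * a = a := coe_eq_of_rel (Or.inl ⟨rfl, rfl⟩)

theorem b_mul_b : b * b = b := coe_eq_of_rel (Or.inr (Or.inl ⟨rfl, rfl⟩))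

theorem a_mul_b_mul_a : a * b * a = b * a := coe_eq_of_rel (Or.inr (Or.inr (Or.inl ⟨rfl, rfl⟩)))

theorem b_mul_a_mul_b : b * a * b = b * a := coe_eq_of_rel (Or.inr (Or.inr (Or.inr ⟨rfl, rfl⟩)))

end A01

namespace A01Model

def toA01 : A01Model → A01
  | one => 1
  | a => A01.a
  | b => A01.b
  | ab => A01.a * A01.b
  | ba => A01.b * A01.a

def evalFree : FreeMonoid (Fin 2) →* A01Model := FreeMonoid.lift ![a, b]

theorem conGen_le_ker_evalFree : conGen A01Rel ≤ Con.ker evalFree :=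
  Con.conGen_le.2 fun _ _ h => by
    rcases h with ⟨rfl, rfl⟩ | ⟨rfl, rfl⟩ | ⟨rfl, rfl⟩ | ⟨rfl, rfl⟩ <;> rfl

def ofA01 : A01 →* A01Model := Con.lift _ evalFree conGen_le_ker_evalFree

theorem ofA01_toA01 (m : A01Model) : ofA01 (toA01 m) = m := by
  cases m <;> rfl

theorem toA01_evalFree_of (i : Fin 2) :
    toA01 (evalFree (FreeMonoid.of i)) = (FreeMonoid.of i : FreeMonoid (Fin 2)) := by
  fin_cases i <;> rfl

theorem toA01_evalFree_of_mul (i : Fin 2) (m : A01Model) :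
    toA01 (evalFree (FreeMonoid.of i) * m) = toA01 (evalFree (FreeMonoid.of i)) * toA01 m := by
  fin_cases i <;> cases m <;>
    simp [evalFree, mul_def, mul, toA01, ← mul_assoc, A01.a_mul_a, A01.b_mul_b,
      A01.a_mul_b_mul_a, A01.b_mul_a_mul_b]

theorem toA01_evalFree (w : FreeMonoid (Fin 2)) : toA01 (evalFree w) = w := by
  induction w using FreeMonoid.inductionOn' with
  | one => rfl
  | of_mul i w ih => rw [map_mul, toA01_evalFree_of_mul, ih, toA01_evalFree_of, Con.coe_mul]

def equivA01 : A01 ≃* A01Model :=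
  { ofA01 with
    invFun := toA01
    left_inv := fun q => Con.induction_on q fun w => by
      rw [MonoidHom.toFun_eq_coe, ofA01, Con.lift_coe, toA01_evalFree]
    right_inv := ofA01_toA01 }

end A01Model

theorem a01WordStar_involutive : Function.Involutive a01WordStar := fun w => by
  simp [a01WordStar, List.map_reverse, Function.comp_def]

theorem A01star_involutive : Function.Involutive A01star := fun q =>
  Con.induction_on q fun w => congrArg ((↑) : FreeMonoid (Fin 2) → A01) (a01WordStar_involutive w)

theorem satW_Cstar_iff (u v : Word) : SatW Cstar u v ↔ MonoidSatisfies A01Model u v :=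
  (satW_prod_swap_iff A01star_involutive u v).trans
    (MonoidSatisfies.congr_mulEquiv A01Model.equivA01)

theorem List.sublist_pair_iff {α : Type*} {x y : α} {l : List α} :
    [x, y].Sublist l ↔ ∃ i j : Fin l.length, i < j ∧ l.get i = x ∧ l.get j = y := by
  constructor
  · intro h
    obtain ⟨f, hf⟩ := List.sublist_iff_exists_fin_orderEmbedding_get_eq.mp h
    exact ⟨f 0, f 1, f.strictMono (by simp), (hf 0).symm, (hf 1).symm⟩
  · rintro ⟨i, j, hij, rfl, rfl⟩
    simpa using List.map_getElem_sublist (l := l) (is := [i, j]) (by simpa using hij)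

section Words

variable {u v w : Word} {x y : Var}

theorem prec_iff_not_sublist (hxy : x ≠ y) : Prec w x y ↔ ¬ [y, x].Sublist w := by
  rw [List.sublist_pair_iff]
  constructor
  · rintro h ⟨j, i, hji, hj, hi⟩
    exact absurd (h i j hi hj) (by omega)
  · intro h i j hi hj
    have hne : i ≠ j := by
      rintro rfl
      exact hxy (hi.symm.trans hj)
    by_contra hle
    exact h ⟨j, i, by omega, hj, hi⟩

theorem not_prec_self (hx : x ∈ w) : ¬ Prec w x x := by
  obtain ⟨i, hi⟩ := List.get_of_mem hx
  exact fun h => lt_irrefl _ (h i i hi hi)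

theorem sublist_pair_self_iff : [x, x].Sublist w ↔ 2 ≤ w.count x :=
  List.replicate_sublist_iff (n := 2)

theorem sameShortSubwords_iff : SameShortSubwords u v ↔ (∀ x, x ∈ u ↔ x ∈ v) ∧
    (∀ x, u.count x = 1 ↔ v.count x = 1) ∧
    ∀ x y, x ∈ u → y ∈ u → (Prec u x y ↔ Prec v x y) := by
  refine and_congr_right fun hcon => ?_
  have hdiag : ∀ x, ([x, x].Sublist u ↔ [x, x].Sublist v) ↔ (u.count x = 1 ↔ v.count x = 1) := by
    intro x
    have hpos := hcon x
    rw [← List.count_pos_iff, ← List.count_pos_iff] at hpos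
    rw [sublist_pair_self_iff, sublist_pair_self_iff]
    omega
  have mem_of_sublist : ∀ {w : Word} {x y : Var}, [x, y].Sublist w → x ∈ w ∧ y ∈ w := fun h =>
    ⟨h.subset (by simp), h.subset (by simp)⟩
  constructor
  · intro h
    refine ⟨fun x => (hdiag x).1 (h x x), fun x y hx hy => ?_⟩
    by_cases hxy : x = y
    · subst hxy
      exact iff_of_false (not_prec_self hx) (not_prec_self ((hcon x).1 hx))
    · rw [prec_iff_not_sublist hxy, prec_iff_not_sublist hxy, h]
  · rintro ⟨hcount, hprec⟩ x y
    by_cases hxy : x = y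
    · subst hxy
      exact (hdiag x).2 (hcount x)
    by_cases hmem : x ∈ u ∧ y ∈ u
    · have := hprec y x hmem.2 hmem.1
      rwa [prec_iff_not_sublist (Ne.symm hxy), prec_iff_not_sublist (Ne.symm hxy),
        not_iff_not] at this
    · refine iff_of_false (fun h => hmem (mem_of_sublist h)) fun h => hmem ?_
      rw [hcon, hcon]
      exact mem_of_sublist h

theorem ml_lin_iff_count (hcon : ∀ x, x ∈ u ↔ x ∈ v) :
    ((∀ x, Ml u x ↔ Ml v x) ∧ (∀ x, Lin u x ↔ Lin v x)) ↔
      ∀ x, u.count x = 1 ↔ v.count x = 1 := by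
  have hmix : ∀ x, Mix u x ↔ Mix v x := fun x => and_congr (hcon x) (hcon _)
  constructor
  · rintro ⟨hml, hlin⟩ x
    by_cases hm : Mix u x
    · simpa only [Ml, hm, (hmix x).1 hm, true_and] using hml x
    · simpa only [Lin, hm, (hmix x).not.1 hm, not_false_eq_true, true_and] using hlin x
  · intro h
    exact ⟨fun x => and_congr (hmix x) (h x), fun x => and_congr (hmix x).not (h x)⟩

end Words

theorem stmt_11_general (u v : Word) :
    SatW Cstar u v ↔
      ((∀ x : Var, x ∈ u ↔ x ∈ v) ∧ (∀ x : Var, Ml u x ↔ Ml v x) ∧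
        (∀ x : Var, Lin u x ↔ Lin v x)) ∧
      (∀ x y : Var, x ∈ u → y ∈ u → (Prec u x y ↔ Prec v x y)) := by
  rw [satW_Cstar_iff, A01Model.monoidSatisfies_iff_sameShortSubwords, sameShortSubwords_iff,
    and_assoc]
  exact and_congr_right fun hcon => by rw [ml_lin_iff_count hcon]

/-- **Theorem 4.6.** A word identity `u ≈ v` holds in the involution monoid
`(C, *) = (A_0^1 × A_0^1, *)` if and only if (i) `con(u) = con(v)`,
`ml(u) = ml(v)`, `lin(u) = lin(v)`, and (ii) for any `x, y ∈ con(u)`,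
`x ≺_u y` iff `x ≺_v y`. -/
theorem stmt_11 (u v : Word) (hu : u ≠ []) (hv : v ≠ []) :
    SatW Cstar u v ↔
      ((∀ x : Var, x ∈ u ↔ x ∈ v) ∧ (∀ x : Var, Ml u x ↔ Ml v x) ∧
        (∀ x : Var, Lin u x ↔ Lin v x)) ∧
      (∀ x y : Var, x ∈ u → y ∈ u → (Prec u x y ↔ Prec v x y)) :=
  stmt_11_general u v
end

section
/- If {ᵢc, ⱼd} ⊆ ocs(u) is an unstable pair in a balanced word identity u ≈ v with ᵢc ≺_u ⱼd, then there exists a pair {ₛp, ₜq} ⊆ ocs(u) with ₛp ≺_u ₜq that is critical in u ≈ v (i.e., the two occurrences ₛp and ₜq are adjacent in u and the pair is unstable). -/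
/-- The (0-indexed) list of positions at which the variable `x` occurs in `u`. -/
def positions (u : Word) (x : Var) : List ℕ :=
  (List.range u.length).filter fun k => decide (u[k]? = some x)

/-- The position in `u` of the `i`-th occurrence (0-indexed) of the variable `x`;
together with `i < count x u` this represents the occurrence `ᵢ₊₁x ∈ ocs(u)`. -/
def occPos (u : Word) (x : Var) (i : ℕ) : ℕ := (positions u x).getD i 0

/-!
Send each position `k` of `u` to the position in `v` of the same occurrence. At `ᵢc` this map
lies above its value at `ⱼd`, although `ᵢc` comes first in `u`; so somewhere between the two it
drops in a single step, and the occurrences at the two adjacent positions of that step form a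
critical pair.
-/

lemma exists_apply_succ_lt_of_lt {α : Type*} [LinearOrder α] {f : ℕ → α} {a b : ℕ} (hab : a ≤ b)
    (hf : f b < f a) : ∃ k, a ≤ k ∧ k < b ∧ f (k + 1) < f k := by
  induction b, hab using Nat.le_induction with
  | base => exact absurd hf (lt_irrefl _)
  | succ b hab ih =>
    by_cases hb : f (b + 1) < f b
    · exact ⟨b, hab, b.lt_succ_self, hb⟩
    · obtain ⟨k, hak, hkb, hk⟩ := ih ((not_lt.1 hb).trans_lt hf)
      exact ⟨k, hak, hkb.trans b.lt_succ_self, hk⟩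

section occPos

variable {u : Word} {a x : Var} {i k : ℕ}

lemma positions_cons (a : Var) (u : Word) (x : Var) :
    positions (a :: u) x = (if a = x then [0] else []) ++ (positions u x).map (· + 1) := by
  unfold positions
  rw [List.length_cons, List.range_succ_eq_map, List.filter_cons]
  simp only [List.getElem?_cons_zero, List.filter_map]
  by_cases h : a = x <;> simp [h, Function.comp_def]

lemma length_positions (u : Word) (x : Var) : (positions u x).length = u.count x := by
  induction u with
  | nil => simp [positions]
  | cons a u ih => by_cases h : a = x <;> simp [positions_cons, h, ih]

lemma occPos_cons_self_zero (u : Word) (x : Var) : occPos (x :: u) x 0 = 0 := by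
  simp [occPos, positions_cons]

lemma occPos_cons_self_succ (h : i < u.count x) : occPos (x :: u) x (i + 1) = occPos u x i + 1 := by
  have h' : i < (positions u x).length := (length_positions u x).symm ▸ h
  simp [occPos, positions_cons, List.getElem?_eq_getElem h']

lemma occPos_cons_of_ne (hax : a ≠ x) (h : i < u.count x) :
    occPos (a :: u) x i = occPos u x i + 1 := by
  have h' : i < (positions u x).length := (length_positions u x).symm ▸ h
  simp [occPos, positions_cons, hax, List.getElem?_eq_getElem h']

lemma getElem?_occPos (h : i < u.count x) : u[occPos u x i]? = some x := by
  induction u generalizing i with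
  | nil => simp at h
  | cons a u ih =>
    by_cases hax : a = x
    · subst hax
      cases i with
      | zero => simp [occPos_cons_self_zero]
      | succ i =>
        have hi : i < u.count a := by simpa using h
        simpa [occPos_cons_self_succ hi] using ih hi
    · have hi : i < u.count x := by simpa [List.count_cons, hax] using h
      simpa [occPos_cons_of_ne hax hi] using ih hi

lemma count_take_occPos (h : i < u.count x) : (u.take (occPos u x i)).count x = i := by
  induction u generalizing i with
  | nil => simp at h
  | cons a u ih =>
    by_cases hax : a = x
    · subst hax
      cases i with
      | zero => simp [occPos_cons_self_zero]
      | succ i =>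
        have hi : i < u.count a := by simpa using h
        simp [occPos_cons_self_succ hi, ih hi]
    · have hi : i < u.count x := by simpa [List.count_cons, hax] using h
      simp [occPos_cons_of_ne hax hi, ih hi, hax]

lemma count_take_lt_count (h : u[k]? = some x) : (u.take k).count x < u.count x := by
  obtain ⟨hk, hx⟩ := List.getElem?_eq_some_iff.mp h
  have hmem : x ∈ u.drop k := by
    rw [List.drop_eq_getElem_cons hk, hx]
    exact List.mem_cons_self
  calc (u.take k).count x < (u.take k).count x + (u.drop k).count x :=
        Nat.lt_add_of_pos_right (List.count_pos_iff.2 hmem)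
    _ = u.count x := by rw [← List.count_append, List.take_append_drop]

lemma occPos_count_take (h : u[k]? = some x) : occPos u x ((u.take k).count x) = k := by
  induction u generalizing k with
  | nil => simp at h
  | cons a u ih =>
    cases k with
    | zero =>
      obtain rfl : a = x := by simpa using h
      simp [occPos_cons_self_zero]
    | succ k =>
      have hk : u[k]? = some x := by simpa using h
      have hlt := count_take_lt_count hk
      by_cases hax : a = x
      · subst hax
        simp [occPos_cons_self_succ hlt, ih hk]
      · simp [hax, occPos_cons_of_ne hax hlt, ih hk]

end occPos

/-- The position in `v` of the occurrence found at position `k` of `u` (junk `0` past the end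
of `u`). -/
def posIn (u v : Word) (k : ℕ) : ℕ :=
  ((u[k]?).map fun x => occPos v x ((u.take k).count x)).getD 0

lemma posIn_of_getElem? {u v : Word} {k : ℕ} {x : Var} (h : u[k]? = some x) :
    posIn u v k = occPos v x ((u.take k).count x) := by
  simp [posIn, h]

lemma posIn_occPos {u v : Word} {x : Var} {i : ℕ} (h : i < u.count x) :
    posIn u v (occPos u x i) = occPos v x i := by
  rw [posIn_of_getElem? (getElem?_occPos h), count_take_occPos h]

theorem stmt_15_general (u v : Word)
    (c d : Var) (i j : ℕ) (hi : i < u.count c) (hj : j < u.count d)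
    (hucd : occPos u c i < occPos u d j) (hvdc : occPos v d j < occPos v c i) :
    ∃ (p q : Var) (s t : ℕ),
      s < u.count p ∧ t < u.count q ∧
      occPos u p s < occPos u q t ∧
      occPos u q t = occPos u p s + 1 ∧
      occPos v q t < occPos v p s := by
  obtain ⟨k, -, hkd, hdrop⟩ := exists_apply_succ_lt_of_lt (f := posIn u v) hucd.le
    (by rwa [posIn_occPos hi, posIn_occPos hj])
  have hd : occPos u d j < u.length := (List.getElem?_eq_some_iff.mp (getElem?_occPos hj)).1
  have hp : u[k]? = some u[k] := List.getElem?_eq_getElem (by omega)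
  have hq : u[k + 1]? = some u[k + 1] := List.getElem?_eq_getElem (by omega)
  refine ⟨u[k], u[k + 1], (u.take k).count u[k], (u.take (k + 1)).count u[k + 1],
    count_take_lt_count hp, count_take_lt_count hq, ?_, ?_, ?_⟩
  · rw [occPos_count_take hp, occPos_count_take hq]; omega
  · rw [occPos_count_take hp, occPos_count_take hq]
  · rwa [← posIn_of_getElem? hp, ← posIn_of_getElem? hq]

/-- **Lemma 5.4.** If the pair `{ᵢc, ⱼd} ⊆ ocs(u)` is unstable in a balanced word
identity `u ≈ v` (that is, `ᵢc ≺_u ⱼd` but `ⱼd ≺_v ᵢc`), then `u ≈ v` contains a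
critical pair: occurrences `ₛp ≺_u ₜq` that are adjacent in `u` and unstable in
`u ≈ v`. (Occurrence indices are 0-based here.) -/
theorem stmt_15 (u v : Word) (hu : u ≠ []) (hv : v ≠ [])
    (hbal : BalancedId u v)
    (c d : Var) (i j : ℕ) (hi : i < u.count c) (hj : j < u.count d)
    (hucd : occPos u c i < occPos u d j) (hvdc : occPos v d j < occPos v c i) :
    ∃ (p q : Var) (s t : ℕ),
      s < u.count p ∧ t < u.count q ∧
      occPos u p s < occPos u q t ∧
      occPos u q t = occPos u p s + 1 ∧
      occPos v q t < occPos v p s :=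
  stmt_15_general u v c d i j hi hj hucd hvdc
end
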